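/- arXiv:1811.12041 — 2 statements merged into one kernel-verified Lean document; each statement's English description precedes it below -/
import Mathlib

section
/- Let ξ ∈ so(n) be such that ξ is the canonical element of a parabolic subalgebra, i.e. ad ξ has eigenvalues in iℤ or i(ℤ+1/2) and so(n,ℂ) is generated by g_{−1} ⊕ g_0 ⊕ g_1. If ξ has half-integer eigenvalues, then the eigenvalues ±i/2 of ξ on ℂⁿ have multiplicity at least 2. -/
/-!
Write `V_t` for the `it`-eigenspace of `ξ` on `ℂⁿ`. If `dim V_{1/2} ≤ 1`, then for `A ∈ g_1` and
`v ∈ V_{-1/2}` both `A v` and `v̄` lie in `V_{1/2}`, so `A v = c v̄`, and skewness of `A` gives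
`0 = vᵀ A v = c vᵀ v̄`, hence `A v = 0`. Since the eigenvalues are half-integers, `g_{-1}`, `g_0`
and `g_1` then all preserve `⊕_{t<0} V_t`, hence so does the Lie algebra they generate, which is
`so(n,ℂ)`. But `⊕_{t<0} V_t` is neither `0` nor `ℂⁿ` (the eigenvalues of the real matrix `ξ` come
in pairs `±it`, and `0` is not one of them), contradicting irreducibility of `ℂⁿ` for `n ≥ 3`.
Complex conjugation exchanges `V_{1/2}` and `V_{-1/2}`, so the two multiplicities agree.
-/

open Matrix Complex Module

attribute [local instance 100] LieRing.ofAssociativeRing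

/-- The complex skew-symmetric matrices `so(n,ℂ)` as a subspace of all matrices. -/
noncomputable def soC (n : ℕ) : Submodule ℂ (Matrix (Fin n) (Fin n) ℂ) where
  carrier := {A | Aᵀ = -A}
  add_mem' := by intro a b ha hb; simp only [Set.mem_setOf_eq] at *; simp [Matrix.transpose_add, ha, hb, neg_add]; abel
  zero_mem' := by simp
  smul_mem' := by intro c a ha; simp only [Set.mem_setOf_eq] at *; simp [Matrix.transpose_smul, ha]

/-- The `(i r)`-eigenspace of `ad ξ` on `so(n,ℂ)`, for `ξ ∈ so(n)` real skew-symmetric,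
as a subspace of complex matrices. -/
noncomputable def adEig {n : ℕ} (ξ : Matrix (Fin n) (Fin n) ℝ) (r : ℝ) :
    Submodule ℂ (Matrix (Fin n) (Fin n) ℂ) :=
  soC n ⊓ Module.End.eigenspace
    (LieAlgebra.ad ℂ (Matrix (Fin n) (Fin n) ℂ) (ξ.map (Complex.ofReal))) (r * Complex.I)


section ElemSkew

variable {R ι : Type*} [Ring R] [DecidableEq ι]

def elemSkew (i j : ι) : Matrix ι ι R := single i j 1 - single j i 1

lemma transpose_elemSkew (i j : ι) : (elemSkew i j : Matrix ι ι R)ᵀ = -elemSkew i j := by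
  simp [elemSkew, transpose_single]

lemma elemSkew_mulVec [Fintype ι] (i j : ι) (x : ι → R) :
    elemSkew i j *ᵥ x = Pi.single i (x j) - Pi.single j (x i) := by
  ext a
  simp [elemSkew, sub_mulVec, single_mulVec_eq, Pi.single_apply]

end ElemSkew

theorem eq_top_of_skew_mulVec_mem {K ι : Type*} [Field K] [Fintype ι] [DecidableEq ι]
    (h : 3 ≤ Fintype.card ι) {W : Submodule K (ι → K)}
    (hW : ∀ A : Matrix ι ι K, Aᵀ = -A → ∀ w ∈ W, A *ᵥ w ∈ W) (hne : W ≠ ⊥) : W = ⊤ := by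
  have hskew : ∀ i j, ∀ w ∈ W, elemSkew i j *ᵥ w ∈ W := fun i j => hW _ (transpose_elemSkew i j)
  have hthird : ∀ i j : ι, ∃ k, k ≠ i ∧ k ≠ j :=
    ENat.exists_ne_ne_of_three_le (by simpa [ENat.card_eq_coe_fintype_card] using h)
  obtain ⟨w, hwW, hw0⟩ := Submodule.exists_mem_ne_zero_of_ne_bot hne
  obtain ⟨k, hk⟩ : ∃ k, w k ≠ 0 := Function.ne_iff.mp hw0
  obtain ⟨i, hik, -⟩ := hthird k k
  obtain ⟨j, hji, hjk⟩ := hthird i k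
  -- `E_{ji} E_{ik}` moves the `k`-th coordinate of `w` to the `j`-th and kills the others.
  have hj : Pi.single j (w k) ∈ W := by
    simpa [elemSkew_mulVec, hik, hji, hjk] using hskew j i _ (hskew i k w hwW)
  have hsingle : ∀ c, Pi.single j c ∈ W := fun c => by
    simpa [← Pi.single_smul, hk] using W.smul_mem (c / w k) hj
  have hall : ∀ l c, Pi.single l c ∈ W := by
    intro l c
    rcases eq_or_ne l j with rfl | hlj
    · exact hsingle c
    · simpa only [elemSkew_mulVec, Pi.single_eq_same, Pi.single_eq_of_ne hlj, Pi.single_zero,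
        sub_zero] using hskew l j _ (hsingle c)
  refine Submodule.eq_top_iff'.mpr fun x => ?_
  rw [← Finset.univ_sum_single x]
  exact sum_mem fun l _ => hall l (x l)

def Submodule.mulVecStabilizer {R ι : Type*} [CommRing R] [Fintype ι] [DecidableEq ι]
    (W : Submodule R (ι → R)) : LieSubalgebra R (Matrix ι ι R) where
  carrier := {A | ∀ w ∈ W, A *ᵥ w ∈ W}
  add_mem' ha hb w hw := by
    rw [add_mulVec]
    exact W.add_mem (ha w hw) (hb w hw)
  zero_mem' w _ := by
    rw [zero_mulVec]
    exact W.zero_mem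
  smul_mem' c _ ha w hw := by
    rw [smul_mulVec]
    exact W.smul_mem c (ha w hw)
  lie_mem' ha hb w hw := by
    rw [Ring.lie_def, sub_mulVec, ← mulVec_mulVec, ← mulVec_mulVec]
    exact W.sub_mem (ha _ (hb w hw)) (hb _ (ha w hw))

section Eigen

open scoped ComplexOrder

variable {ι : Type*}

lemma conjTranspose_map_ofReal (ξ : Matrix ι ι ℝ) : (ξ.map ofReal)ᴴ = ξᵀ.map ofReal := by
  rw [← conjTranspose_map _ fun x => by simp, conjTranspose_eq_transpose_of_trivial]

variable [Fintype ι]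

lemma dotProduct_mulVec_self_of_transpose_eq_neg {R : Type*} [CommRing R] [IsDomain R]
    [CharZero R] {A : Matrix ι ι R} (hA : Aᵀ = -A) (v : ι → R) : v ⬝ᵥ A *ᵥ v = 0 := by
  have h : v ⬝ᵥ A *ᵥ v = -(v ⬝ᵥ A *ᵥ v) := by
    conv_lhs => rw [dotProduct_mulVec, ← mulVec_transpose, hA, neg_mulVec, neg_dotProduct,
      dotProduct_comm]
  exact self_eq_neg.mp h

lemma mulVec_eq_zero_of_star_mem {A : Matrix ι ι ℂ} (hA : Aᵀ = -A) {U : Submodule ℂ (ι → ℂ)}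
    (hU : finrank ℂ U ≤ 1) {v : ι → ℂ} (hv : star v ∈ U) (hAv : A *ᵥ v ∈ U) : A *ᵥ v = 0 := by
  rcases eq_or_ne v 0 with rfl | hv0
  · exact mulVec_zero A
  obtain ⟨g, hg⟩ := finrank_le_one_iff.mp hU
  obtain ⟨a, ha⟩ := hg ⟨star v, hv⟩
  obtain ⟨b, hb⟩ := hg ⟨A *ᵥ v, hAv⟩
  have ha' : a • (g : ι → ℂ) = star v := congrArg Subtype.val ha
  have hb' : b • (g : ι → ℂ) = A *ᵥ v := congrArg Subtype.val hb
  have ha0 : a ≠ 0 := by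
    rintro rfl
    exact hv0 (star_eq_zero.mp (by simpa using ha'.symm))
  have hAv_eq : A *ᵥ v = (b / a) • star v := by
    rw [← ha', smul_smul, div_mul_cancel₀ _ ha0, hb']
  have hzero := dotProduct_mulVec_self_of_transpose_eq_neg hA v
  rw [hAv_eq, dotProduct_smul, smul_eq_mul, mul_eq_zero] at hzero
  rw [hAv_eq, hzero.resolve_right (dotProduct_self_star_eq_zero.not.mpr hv0), zero_smul]

lemma star_mulVec_map_ofReal (ξ : Matrix ι ι ℝ) (v : ι → ℂ) :
    star (ξ.map ofReal *ᵥ v) = ξ.map ofReal *ᵥ star v := by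
  rw [star_mulVec, conjTranspose_map_ofReal, transpose_map, vecMul_transpose]

variable [DecidableEq ι]

lemma re_eq_zero_of_hasEigenvalue {M : Matrix ι ι ℂ} (hM : Mᴴ = -M) {μ : ℂ}
    (hμ : Module.End.HasEigenvalue (toLin' M) μ) : μ.re = 0 := by
  obtain ⟨v, hv, hv0⟩ := hμ.exists_hasEigenvector
  have hMv : M *ᵥ v = μ • v := by simpa [Module.End.mem_eigenspace_iff] using hv
  have hstar : star (M *ᵥ v) ⬝ᵥ v = -(star v ⬝ᵥ M *ᵥ v) := by
    rw [star_mulVec, hM, vecMul_neg, neg_dotProduct, dotProduct_mulVec]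
  rw [hMv, star_smul, smul_dotProduct, dotProduct_smul, smul_eq_mul, smul_eq_mul, ← neg_mul,
    ← sub_eq_zero, ← sub_mul, mul_eq_zero] at hstar
  have hsum : star μ + μ = 0 := by
    simpa [dotProduct_star_self_eq_zero, hv0] using hstar
  have hre := congrArg Complex.re hsum
  simp only [Complex.star_def, add_re, conj_re, zero_re] at hre
  linarith

lemma mulVec_mem_eigenspace_add {R : Type*} [CommRing R] {X A : Matrix ι ι R} {a b : R}
    (hA : A ∈ Module.End.eigenspace (LieAlgebra.ad R (Matrix ι ι R) X) a) {v : ι → R}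
    (hv : v ∈ Module.End.eigenspace (toLin' X) b) :
    A *ᵥ v ∈ Module.End.eigenspace (toLin' X) (b + a) := by
  rw [Module.End.mem_eigenspace_iff, LieAlgebra.ad_apply, Ring.lie_def] at hA
  rw [Module.End.mem_eigenspace_iff, toLin'_apply] at hv ⊢
  rw [mulVec_mulVec, ← sub_add_cancel (X * A) (A * X), hA, add_mulVec, smul_mulVec,
    ← mulVec_mulVec, hv, mulVec_smul, add_smul, add_comm]

def imEigenspace (ξ : Matrix ι ι ℝ) (t : ℝ) : Submodule ℂ (ι → ℂ) :=
  Module.End.eigenspace (toLin' (ξ.map ofReal)) (t * I)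

variable {ξ : Matrix ι ι ℝ}

lemma mem_imEigenspace {t : ℝ} {v : ι → ℂ} :
    v ∈ imEigenspace ξ t ↔ ξ.map ofReal *ᵥ v = (t * I) • v := by
  rw [imEigenspace, Module.End.mem_eigenspace_iff, toLin'_apply]

lemma star_mem_imEigenspace_neg {t : ℝ} {v : ι → ℂ} (hv : v ∈ imEigenspace ξ t) :
    star v ∈ imEigenspace ξ (-t) := by
  rw [mem_imEigenspace] at hv ⊢
  rw [← star_mulVec_map_ofReal, hv, star_smul]
  simp

lemma finrank_imEigenspace_neg (ξ : Matrix ι ι ℝ) (t : ℝ) :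
    finrank ℂ (imEigenspace ξ (-t)) = finrank ℂ (imEigenspace ξ t) := by
  let e : imEigenspace ξ t ≃+ imEigenspace ξ (-t) :=
    { toFun v := ⟨star v, star_mem_imEigenspace_neg v.2⟩
      invFun v := ⟨star v, by simpa using star_mem_imEigenspace_neg v.2⟩
      left_inv v := Subtype.ext (star_star _)
      right_inv v := Subtype.ext (star_star _)
      map_add' v w := Subtype.ext (star_add _ _) }
  have := rank_eq_of_equiv_equiv (starRingEnd ℂ) e star_involutive.bijective
    fun c v => Subtype.ext (star_smul c v.1)
  simp [finrank, this]

lemma iSupIndep_imEigenspace (ξ : Matrix ι ι ℝ) : iSupIndep (imEigenspace ξ) :=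
  (Module.End.eigenspaces_iSupIndep _).comp (f := fun t : ℝ => (t : ℂ) * I) fun s t h => by
    simpa using mul_right_cancel₀ I_ne_zero h

lemma exists_imEigenspace_ne_bot [Nonempty ι] (hskew : ξᵀ = -ξ) :
    ∃ t, imEigenspace ξ t ≠ ⊥ := by
  obtain ⟨μ, hμ⟩ := Module.End.exists_eigenvalue (toLin' (ξ.map ofReal))
  have hre : μ.re = 0 := re_eq_zero_of_hasEigenvalue (by
    rw [conjTranspose_map_ofReal, hskew, Matrix.map_neg _ ofReal_neg]) hμ
  have hμ_eq : (μ.im : ℂ) * I = μ := by apply Complex.ext <;> simp [hre]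
  exact ⟨μ.im, by rw [imEigenspace, hμ_eq]; exact Module.End.hasEigenvalue_iff.mp hμ⟩

def negImEigenspaces (ξ : Matrix ι ι ℝ) : Submodule ℂ (ι → ℂ) :=
  ⨆ t ∈ Set.Iio (0 : ℝ), imEigenspace ξ t

lemma exists_pos_imEigenspace_ne_bot [Nonempty ι] (hskew : ξᵀ = -ξ)
    (h0 : imEigenspace ξ 0 = ⊥) :
    ∃ s > 0, imEigenspace ξ s ≠ ⊥ ∧ imEigenspace ξ (-s) ≠ ⊥ := by
  obtain ⟨t, ht⟩ := exists_imEigenspace_ne_bot hskew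
  have hneg : imEigenspace ξ (-t) ≠ ⊥ := by
    rwa [ne_eq, ← Submodule.finrank_eq_zero, finrank_imEigenspace_neg, Submodule.finrank_eq_zero]
  have ht0 : t ≠ 0 := by
    rintro rfl
    exact ht h0
  rcases ht0.lt_or_gt with h | h
  · exact ⟨-t, neg_pos.mpr h, hneg, by rwa [neg_neg]⟩
  · exact ⟨t, h, ht, hneg⟩

lemma imEigenspace_le_negImEigenspaces {t : ℝ} (ht : t < 0) :
    imEigenspace ξ t ≤ negImEigenspaces ξ :=
  le_iSup₂ (f := fun t (_ : t ∈ Set.Iio 0) => imEigenspace ξ t) t ht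

lemma disjoint_imEigenspace_negImEigenspaces {t : ℝ} (ht : 0 ≤ t) :
    Disjoint (imEigenspace ξ t) (negImEigenspaces ξ) :=
  (iSupIndep_imEigenspace ξ).disjoint_biSup ht.not_gt

end Eigen

lemma eq_neg_half_of_half_integer {t : ℝ} {m : ℤ} (hm : t = m + 1 / 2) (ht : t < 0)
    (ht1 : 0 ≤ t + 1) : t = -(1 / 2) := by
  have hm_neg : m < 0 := by exact_mod_cast (by linarith : (m : ℝ) < 0)
  have hm_gt : -2 < m := by exact_mod_cast (by linarith : (-2 : ℝ) < m)
  obtain rfl : m = -1 := by omega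
  rw [hm]
  norm_num

section Canonical

variable {n : ℕ} {ξ : Matrix (Fin n) (Fin n) ℝ}

lemma adEig_subset_mulVecStabilizer (hhalf : ∀ t, imEigenspace ξ t ≠ ⊥ → ∃ m : ℤ, t = m + 1 / 2)
    (hle : finrank ℂ (imEigenspace ξ (1 / 2)) ≤ 1) {r : ℝ} (hr : r ≤ 0 ∨ r = 1) :
    (adEig ξ r : Set (Matrix (Fin n) (Fin n) ℂ)) ⊆ (negImEigenspaces ξ).mulVecStabilizer := by
  intro A hA
  obtain ⟨hAskew, hAeig⟩ := Submodule.mem_inf.mp hA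
  suffices negImEigenspaces ξ ≤ (negImEigenspaces ξ).comap (toLin' A) from fun w hw => this hw
  refine iSup₂_le fun t (ht : t < 0) v hv => ?_
  rw [Submodule.mem_comap, toLin'_apply]
  have hAv : A *ᵥ v ∈ imEigenspace ξ (t + r) := by
    simpa [imEigenspace, add_mul] using mulVec_mem_eigenspace_add hAeig hv
  by_cases htr : t + r < 0
  · exact imEigenspace_le_negImEigenspaces htr hAv
  rcases eq_or_ne v 0 with rfl | hv0
  · simp
  obtain rfl : r = 1 := hr.resolve_left fun hr => htr (by linarith)
  obtain ⟨m, hm⟩ := hhalf t (Submodule.ne_bot_iff _ |>.mpr ⟨v, hv, hv0⟩)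
  obtain rfl := eq_neg_half_of_half_integer hm ht (by linarith)
  have hAv0 : A *ᵥ v = 0 := mulVec_eq_zero_of_star_mem hAskew hle
    (by simpa using star_mem_imEigenspace_neg hv) (by norm_num at hAv ⊢; exact hAv)
  rw [hAv0]
  exact zero_mem _

theorem two_le_finrank_imEigenspace_half (hn : 3 ≤ n) (hskew : ξᵀ = -ξ)
    (hhalf : ∀ t, imEigenspace ξ t ≠ ⊥ → ∃ m : ℤ, t = m + 1 / 2)
    (hgen : (LieSubalgebra.lieSpan ℂ (Matrix (Fin n) (Fin n) ℂ)
        ((adEig ξ (-1) : Set (Matrix (Fin n) (Fin n) ℂ))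
          ∪ (adEig ξ 0 : Set (Matrix (Fin n) (Fin n) ℂ))
          ∪ (adEig ξ 1 : Set (Matrix (Fin n) (Fin n) ℂ)))).toSubmodule = soC n) :
    2 ≤ finrank ℂ (imEigenspace ξ (1 / 2)) := by
  by_contra! hlt
  have hle : finrank ℂ (imEigenspace ξ (1 / 2)) ≤ 1 := Nat.le_of_lt_succ hlt
  set W := negImEigenspaces ξ
  have hinv : ∀ A : Matrix (Fin n) (Fin n) ℂ, Aᵀ = -A → ∀ w ∈ W, A *ᵥ w ∈ W := by
    intro A hA
    have hA' : A ∈ LieSubalgebra.lieSpan ℂ _ ((adEig ξ (-1) : Set (Matrix (Fin n) (Fin n) ℂ))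
        ∪ adEig ξ 0 ∪ adEig ξ 1) := by
      rw [← LieSubalgebra.mem_toSubmodule, hgen]
      exact hA
    refine (LieSubalgebra.lieSpan_le.mpr ?_ hA' : A ∈ W.mulVecStabilizer)
    exact Set.union_subset (Set.union_subset
      (adEig_subset_mulVecStabilizer hhalf hle (Or.inl (by norm_num)))
      (adEig_subset_mulVecStabilizer hhalf hle (Or.inl le_rfl)))
      (adEig_subset_mulVecStabilizer hhalf hle (Or.inr rfl))
  have h0 : imEigenspace ξ 0 = ⊥ := by
    by_contra h
    obtain ⟨m, hm⟩ := hhalf 0 h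
    have : (2 * m + 1 : ℤ) = 0 := by exact_mod_cast (by linarith : (2 * m + 1 : ℝ) = 0)
    omega
  have : Nonempty (Fin n) := ⟨⟨0, by omega⟩⟩
  obtain ⟨s, hs, hVs, hVns⟩ := exists_pos_imEigenspace_ne_bot hskew h0
  have hWbot : W ≠ ⊥ := by
    have : imEigenspace ξ (-s) ≤ W := imEigenspace_le_negImEigenspaces (neg_neg_of_pos hs)
    exact fun h => hVns (le_bot_iff.mp (h ▸ this))
  have hWtop : W ≠ ⊤ := by
    have : Disjoint (imEigenspace ξ s) W := disjoint_imEigenspace_negImEigenspaces hs.le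
    exact fun h => hVs (disjoint_top.mp (h ▸ this))
  exact hWtop (eq_top_of_skew_mulVec_mem (by simpa using hn) hinv hWbot)

end Canonical

/-- If `ξ ∈ so(n)` (`n ≥ 3`) is canonical — i.e. `so(n,ℂ)` is generated by
`g_{-1} ⊕ g_0 ⊕ g_1` — and the eigenvalues of `ξ` on `ℂⁿ` are half-integers, then the
eigenvalues `± i/2` of `ξ` have multiplicity at least `2`. -/
theorem half_eigenvalue_multiplicity_ge_two {n : ℕ} (hn : 3 ≤ n)
    (ξ : Matrix (Fin n) (Fin n) ℝ) (hskew : ξᵀ = -ξ)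
    (hhalf : ∀ lam : ℝ,
      Module.End.HasEigenvalue (Matrix.toLin' (ξ.map (Complex.ofReal))) (lam * Complex.I) →
      ∃ m : ℤ, lam = (m : ℝ) + 1 / 2)
    (hgen : (LieSubalgebra.lieSpan ℂ (Matrix (Fin n) (Fin n) ℂ)
        ((adEig ξ (-1) : Set (Matrix (Fin n) (Fin n) ℂ))
          ∪ (adEig ξ 0 : Set (Matrix (Fin n) (Fin n) ℂ))
          ∪ (adEig ξ 1 : Set (Matrix (Fin n) (Fin n) ℂ)))).toSubmodule = soC n) :
    2 ≤ Module.finrank ℂ (Module.End.eigenspace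
        (Matrix.toLin' (ξ.map (Complex.ofReal))) ((1 / 2 : ℝ) * Complex.I)) ∧
    2 ≤ Module.finrank ℂ (Module.End.eigenspace
        (Matrix.toLin' (ξ.map (Complex.ofReal))) ((-(1 / 2) : ℝ) * Complex.I)) := by
  have h := two_le_finrank_imEigenspace_half hn hskew
    (fun t ht => hhalf t (Module.End.hasEigenvalue_iff.mpr ht)) hgen
  exact ⟨h, h.trans (finrank_imEigenspace_neg ξ (1 / 2)).ge⟩
end

section
/- Let ξ ∈ so(n) have eigenvalues on ℂⁿ exactly ±i·j for 0 ≤ j ≤ k (all integers occurring, case (a)), or exactly ±i(j+1/2) for 0 ≤ j ≤ k with the eigenvalues ±i/2 having multiplicity at least 2 (case (b)). Then for every ℓ > 1, the (iℓ)-eigenspace g_ℓ of ad ξ on so(n,ℂ) satisfies g_ℓ = [g_1, g_{ℓ−1}]; consequently so(n,ℂ) is generated by g_{−1} ⊕ g_0 ⊕ g_1 and ξ is a canonical element. -/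
open Matrix Complex Module

attribute [local instance 100] LieRing.ofAssociativeRing

/-- The span of all brackets `⁅x, y⁆` with `x ∈ p`, `y ∈ q`. -/
def bracketSpan {K L : Type*} [Field K] [LieRing L] [LieAlgebra K L]
    (p q : Submodule K L) : Submodule K L :=
  Submodule.span K {z | ∃ x ∈ p, ∃ y ∈ q, ⁅x, y⁆ = z}


/-!
Identify `so(n,ℂ)` with `Λ²ℂⁿ` via `a ∧ b = a bᵀ - b aᵀ`. If `a, b` are eigenvectors of `ξ`
for `iλ, iμ`, then `a ∧ b` lies in the `i(λ+μ)`-eigenspace `g_{λ+μ}` of `ad ξ`, and since `ξ`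
is diagonalizable these wedges span `g_ℓ`. The bilinear pairing `a ⬝ᵥ b` vanishes unless
`λ + μ = 0`, and complex conjugation pairs `V_λ` nondegenerately with `V_{-λ}`. So if
`u ∈ V_{λ-1}` is nonzero with `a ⬝ᵥ u = 0` and `z ∈ V_{1-λ}` has `z ⬝ᵥ u = 1`, then
`⁅a ∧ z, u ∧ b⁆ = a ∧ b` with `a ∧ z ∈ g_1` and `u ∧ b ∈ g_{ℓ-1}`. The eigenvalue pattern
provides such a `u` for `a` or for `b`; only for `λ = 1/2` is `a ⬝ᵥ u = 0` not automatic, and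
there the multiplicity of `i/2` supplies it. The same argument with `-1` in place of `1`
handles negative degrees, and all degrees are integers, so `g_{-1} ⊕ g_0 ⊕ g_1` generates
`so(n,ℂ)`.
-/

namespace Matrix

section Wedge

variable {ι R : Type*} [CommRing R]

def wedge : (ι → R) →ₗ[R] (ι → R) →ₗ[R] Matrix ι ι R :=
  vecMulVecBilin R R - (vecMulVecBilin R R).flip

theorem wedge_apply (a b : ι → R) : wedge a b = vecMulVec a b - vecMulVec b a := rfl

theorem wedge_swap (a b : ι → R) : wedge b a = -wedge a b := by
  simp only [wedge_apply, neg_sub]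

theorem transpose_wedge (a b : ι → R) : (wedge a b)ᵀ = -wedge a b := by
  simp only [wedge_apply, transpose_sub, transpose_vecMulVec, neg_sub]

theorem lie_wedge_wedge [Fintype ι] (a b c d : ι → R) :
    ⁅wedge a b, wedge c d⁆ = (b ⬝ᵥ c) • wedge a d - (b ⬝ᵥ d) • wedge a c
      - (a ⬝ᵥ c) • wedge b d + (a ⬝ᵥ d) • wedge b c := by
  simp only [Ring.lie_def, wedge_apply, sub_mul, mul_sub, vecMulVec_mul_vecMulVec,
    vecMulVec_smul, smul_sub, dotProduct_comm b, dotProduct_comm a]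
  abel

theorem lie_wedge_of_mulVec_eq [Fintype ι] {M : Matrix ι ι R} (hM : Mᵀ = -M) {α β : R}
    {a b : ι → R}
    (ha : M *ᵥ a = α • a) (hb : M *ᵥ b = β • b) :
    ⁅M, wedge a b⁆ = (α + β) • wedge a b := by
  simp only [Ring.lie_def, wedge_apply, mul_sub, sub_mul, mul_vecMulVec, vecMulVec_mul,
    ← mulVec_transpose, hM, neg_mulVec, ha, hb, smul_vecMulVec, vecMulVec_smul, vecMulVec_neg,
    add_smul, smul_sub]
  abel

theorem add_mul_dotProduct_eq_zero [Fintype ι] {M : Matrix ι ι R} (hM : Mᵀ = -M) {α β : R}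
    {a b : ι → R}
    (ha : M *ᵥ a = α • a) (hb : M *ᵥ b = β • b) : (α + β) * (a ⬝ᵥ b) = 0 := by
  have h : (M *ᵥ a) ⬝ᵥ b = a ⬝ᵥ (Mᵀ *ᵥ b) := by rw [dotProduct_mulVec, vecMul_transpose]
  rw [hM, neg_mulVec, dotProduct_neg, ha, hb, smul_dotProduct, dotProduct_smul, smul_eq_mul,
    smul_eq_mul] at h
  linear_combination h

theorem sum_wedge_col_single [Fintype ι] [DecidableEq ι] (A : Matrix ι ι R) :
    ∑ j, wedge (fun i => A i j) (Pi.single j 1) = A - Aᵀ := by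
  ext i k
  simp [wedge_apply, vecMulVec_apply, Matrix.sum_apply, Pi.single_apply]

end Wedge

end Matrix

theorem Submodule.mem_of_mem_iSup_of_iSupIndep {ι R M : Type*} [Ring R] [AddCommGroup M]
    [Module R M] {p N : ι → Submodule R M} (hp : iSupIndep p) (hN : ∀ i, N i ≤ p i) {i : ι}
    {x : M} (hx : x ∈ ⨆ j, N j) (hxi : x ∈ p i) : x ∈ N i := by
  rw [iSup_split_single N i] at hx
  obtain ⟨y, hy, z, hz, rfl⟩ := Submodule.mem_sup.1 hx
  have hz_mem : z ∈ p i := by simpa using sub_mem hxi (hN i hy)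
  have hz_rest : z ∈ ⨆ (j) (_ : j ≠ i), p j := iSup₂_mono (fun j _ => hN j) hz
  rw [Submodule.disjoint_def.1 (hp i) z hz_mem hz_rest, add_zero]
  exact hy

section SkewEigen

variable {n : ℕ} {ξ : Matrix (Fin n) (Fin n) ℝ}

noncomputable def vecEig (ξ : Matrix (Fin n) (Fin n) ℝ) (r : ℝ) : Submodule ℂ (Fin n → ℂ) :=
  End.eigenspace (toLin' (ξ.map ofReal)) (r * I)

theorem mem_vecEig {r : ℝ} {v : Fin n → ℂ} :
    v ∈ vecEig ξ r ↔ ξ.map ofReal *ᵥ v = (r * I) • v := by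
  rw [vecEig, End.mem_eigenspace_iff, toLin'_apply]

theorem transpose_map_ofReal (hskew : ξᵀ = -ξ) : (ξ.map ofReal)ᵀ = -ξ.map ofReal := by
  rw [← transpose_map, hskew, Matrix.map_neg _ ofReal_neg]

theorem star_mem_vecEig {r : ℝ} {v : Fin n → ℂ} (hv : v ∈ vecEig ξ r) :
    star v ∈ vecEig ξ (-r) := by
  have h : ξ.map ofReal *ᵥ star v = star (ξ.map ofReal *ᵥ v) := by
    ext i
    simp [mulVec, dotProduct, star_sum, mul_comm]
  rw [mem_vecEig] at hv ⊢
  rw [h, hv]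
  ext i
  simp [mul_comm]

theorem dotProduct_eq_zero_of_mem_vecEig (hskew : ξᵀ = -ξ) {r s : ℝ} {a b : Fin n → ℂ}
    (ha : a ∈ vecEig ξ r) (hb : b ∈ vecEig ξ s) (hrs : r + s ≠ 0) : a ⬝ᵥ b = 0 := by
  have h := add_mul_dotProduct_eq_zero (transpose_map_ofReal hskew) (mem_vecEig.1 ha)
    (mem_vecEig.1 hb)
  refine (mul_eq_zero.1 h).resolve_left ?_
  rw [← add_mul, ← ofReal_add]
  exact mul_ne_zero (ofReal_ne_zero.2 hrs) I_ne_zero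

theorem iSup_vecEig_eq_top (hskew : ξᵀ = -ξ) : ⨆ r : ℝ, vecEig ξ r = ⊤ := by
  have hH : (I • ξ.map ofReal).IsHermitian := by
    ext i j
    have h := congrFun (congrFun hskew j) i
    simp only [transpose_apply, Matrix.neg_apply] at h
    simp [h]
  rw [eq_top_iff, ← (hH.eigenvectorBasis.toBasis.map (WithLp.linearEquiv 2 ℂ (Fin n → ℂ))).span_eq,
    Submodule.span_le]
  rintro _ ⟨j, rfl⟩
  refine Submodule.mem_iSup_of_mem (-hH.eigenvalues j) (mem_vecEig.2 ?_)
  set w := (hH.eigenvectorBasis j).ofLp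
  have h : I • (ξ.map ofReal *ᵥ w) = hH.eigenvalues j • w := by
    rw [← smul_mulVec]
    exact hH.mulVec_eigenvectorBasis j
  calc ξ.map ofReal *ᵥ w = (-I) • I • (ξ.map ofReal *ᵥ w) := by simp [smul_smul]
    _ = (↑(-hH.eigenvalues j) * I) • w := by
      rw [h]
      ext i
      simp only [Pi.smul_apply, real_smul, smul_eq_mul, neg_mul, ofReal_neg, neg_inj]
      ring

end SkewEigen

section AdEigen

variable {n : ℕ} {ξ : Matrix (Fin n) (Fin n) ℝ}

theorem mem_adEig {r : ℝ} {A : Matrix (Fin n) (Fin n) ℂ} :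
    A ∈ adEig ξ r ↔ Aᵀ = -A ∧ ⁅ξ.map ofReal, A⁆ = (r * I) • A := by
  rw [adEig, Submodule.mem_inf, End.mem_eigenspace_iff, LieAlgebra.ad_apply]
  rfl

theorem wedge_mem_adEig (hskew : ξᵀ = -ξ) {r s : ℝ} {a b : Fin n → ℂ}
    (ha : a ∈ vecEig ξ r) (hb : b ∈ vecEig ξ s) : wedge a b ∈ adEig ξ (r + s) := by
  refine mem_adEig.2 ⟨transpose_wedge a b, ?_⟩
  rw [lie_wedge_of_mulVec_eq (transpose_map_ofReal hskew) (mem_vecEig.1 ha) (mem_vecEig.1 hb),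
    ← add_mul, ← ofReal_add]

theorem lie_mem_adEig {r s : ℝ} {x y : Matrix (Fin n) (Fin n) ℂ} (hx : x ∈ adEig ξ r)
    (hy : y ∈ adEig ξ s) : ⁅x, y⁆ ∈ adEig ξ (r + s) := by
  obtain ⟨hx_skew, hx_eig⟩ := mem_adEig.1 hx
  obtain ⟨hy_skew, hy_eig⟩ := mem_adEig.1 hy
  refine mem_adEig.2 ⟨?_, ?_⟩
  · simp only [Ring.lie_def, transpose_sub, transpose_mul, hx_skew, hy_skew, neg_mul_neg]
    abel
  · rw [leibniz_lie, hx_eig, hy_eig, smul_lie, lie_smul, ← add_smul, ofReal_add, add_mul]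

noncomputable def wedgeSpan (ξ : Matrix (Fin n) (Fin n) ℝ) (r : ℝ) :
    Submodule ℂ (Matrix (Fin n) (Fin n) ℂ) :=
  ⨆ (s : ℝ) (t : ℝ) (_ : s + t = r), Submodule.map₂ wedge (vecEig ξ s) (vecEig ξ t)

theorem wedgeSpan_le_adEig (hskew : ξᵀ = -ξ) (r : ℝ) : wedgeSpan ξ r ≤ adEig ξ r :=
  iSup₂_le fun _ _ => iSup_le fun hst => Submodule.map₂_le.2 fun _ ha _ hb =>
    hst ▸ wedge_mem_adEig hskew ha hb

theorem soC_le_iSup_wedgeSpan (hskew : ξᵀ = -ξ) : soC n ≤ ⨆ r, wedgeSpan ξ r := by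
  have hwedge : Submodule.map₂ wedge ⊤ ⊤ ≤ ⨆ r, wedgeSpan ξ r := by
    rw [← iSup_vecEig_eq_top hskew, Submodule.map₂_iSup_left]
    refine iSup_le fun s => ?_
    rw [Submodule.map₂_iSup_right]
    exact iSup_le fun t => le_iSup_of_le (s + t) <| le_iSup₂_of_le s t <| le_iSup_of_le rfl le_rfl
  intro A hA
  have hA' : A = (2 : ℂ)⁻¹ • ∑ j, wedge (fun i => A i j) (Pi.single j 1) := by
    rw [sum_wedge_col_single, (hA : Aᵀ = -A), sub_neg_eq_add, ← two_smul ℂ A, smul_smul,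
      inv_mul_cancel₀ two_ne_zero, one_smul]
  rw [hA']
  exact Submodule.smul_mem _ _ <| Submodule.sum_mem _ fun j _ =>
    hwedge (Submodule.apply_mem_map₂ _ Submodule.mem_top Submodule.mem_top)

theorem adEig_le_wedgeSpan (hskew : ξᵀ = -ξ) (r : ℝ) : adEig ξ r ≤ wedgeSpan ξ r := by
  intro A hA
  have hindep := (End.eigenspaces_iSupIndep (LieAlgebra.ad ℂ (Matrix (Fin n) (Fin n) ℂ)
    (ξ.map ofReal))).comp (f := fun s : ℝ => (s : ℂ) * I) fun s t hst => by simpa using hst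
  exact Submodule.mem_of_mem_iSup_of_iSupIndep hindep
    (fun s => (wedgeSpan_le_adEig hskew s).trans inf_le_right)
    (soC_le_iSup_wedgeSpan hskew hA.1) hA.2

end AdEigen

theorem Submodule.exists_mem_ne_zero_dotProduct_eq_zero {K ι : Type*} [Field K] [Fintype ι]
    (V : Submodule K (ι → K)) (hV : 2 ≤ finrank K V) (w : ι → K) :
    ∃ c ∈ V, c ≠ 0 ∧ w ⬝ᵥ c = 0 := by
  let φ : V →ₗ[K] K := (dotProductBilin K K w).comp V.subtype
  have hker : 0 < finrank K (LinearMap.ker φ) := by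
    have hrange : finrank K (LinearMap.range φ) ≤ 1 := by
      simpa using Submodule.finrank_le (LinearMap.range φ)
    have := LinearMap.finrank_range_add_finrank_ker φ
    omega
  have := Module.nontrivial_of_finrank_pos hker
  obtain ⟨⟨c, hc⟩, hc0⟩ := exists_ne (0 : LinearMap.ker φ)
  exact ⟨c, c.2, by simpa using hc0, hc⟩

section Lowering

variable {n : ℕ} {ξ : Matrix (Fin n) (Fin n) ℝ}

def Lowerable (ξ : Matrix (Fin n) (Fin n) ℝ) (s r : ℝ) : Prop :=
  ∀ a ∈ vecEig ξ r, ∃ u ∈ vecEig ξ (r - s), u ≠ 0 ∧ a ⬝ᵥ u = 0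

theorem lowerable_of_ne_bot (hskew : ξᵀ = -ξ) {s r : ℝ} (h : vecEig ξ (r - s) ≠ ⊥)
    (hr : 2 * r ≠ s) : Lowerable ξ s r := by
  intro a ha
  obtain ⟨u, hu, hu0⟩ := Submodule.exists_mem_ne_zero_of_ne_bot h
  refine ⟨u, hu, hu0, dotProduct_eq_zero_of_mem_vecEig hskew ha hu ?_⟩
  contrapose! hr
  linarith

theorem lowerable_one_half (hdim : 2 ≤ finrank ℂ (vecEig ξ (1 / 2))) :
    Lowerable ξ 1 (1 / 2) := by
  intro a _
  obtain ⟨c, hc, hc0, hac⟩ := Submodule.exists_mem_ne_zero_dotProduct_eq_zero _ hdim (star a)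
  refine ⟨star c, by convert star_mem_vecEig hc using 2; norm_num, star_ne_zero.2 hc0, ?_⟩
  rw [dotProduct_star, dotProduct_comm, hac, star_zero]

theorem lowerable_neg_one_half (hdim : 2 ≤ finrank ℂ (vecEig ξ (1 / 2))) :
    Lowerable ξ (-1) (-1 / 2) := by
  intro a _
  obtain ⟨c, hc, hc0, hac⟩ := Submodule.exists_mem_ne_zero_dotProduct_eq_zero _ hdim a
  exact ⟨c, by convert hc using 2; norm_num, hc0, hac⟩

open scoped ComplexOrder in
theorem wedge_mem_bracketSpan_of_lowering (hskew : ξᵀ = -ξ) {r t s : ℝ} {a b u : Fin n → ℂ}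
    (ha : a ∈ vecEig ξ r) (hb : b ∈ vecEig ξ t) (hu : u ∈ vecEig ξ (r - s)) (hu0 : u ≠ 0)
    (hau : a ⬝ᵥ u = 0) (hrt : r + t ≠ 0) (hts : t + s ≠ r) :
    wedge a b ∈ bracketSpan (adEig ξ s) (adEig ξ (r + t - s)) := by
  set z := (u ⬝ᵥ star u)⁻¹ • star u
  have hz : z ∈ vecEig ξ (s - r) :=
    Submodule.smul_mem _ _ (by simpa using star_mem_vecEig hu)
  have hzu : z ⬝ᵥ u = 1 := by
    rw [smul_dotProduct, smul_eq_mul, dotProduct_comm (star u),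
      inv_mul_cancel₀ (dotProduct_self_star_eq_zero.not.2 hu0)]
  have hzb : z ⬝ᵥ b = 0 :=
    dotProduct_eq_zero_of_mem_vecEig hskew hz hb (by contrapose! hts; linarith)
  have hab : a ⬝ᵥ b = 0 := dotProduct_eq_zero_of_mem_vecEig hskew ha hb hrt
  have hx : wedge a z ∈ adEig ξ s := by simpa using wedge_mem_adEig hskew ha hz
  have hy : wedge u b ∈ adEig ξ (r + t - s) := by
    simpa [sub_add_eq_add_sub] using wedge_mem_adEig hskew hu hb
  refine Submodule.subset_span ⟨_, hx, _, hy, ?_⟩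
  rw [lie_wedge_wedge, hzu, hzb, hau, hab]
  simp

theorem wedge_mem_bracketSpan (hskew : ξᵀ = -ξ) {r t s : ℝ} (hs : s ≠ 0) {a b : Fin n → ℂ}
    (ha : a ∈ vecEig ξ r) (hb : b ∈ vecEig ξ t) (hrt : r + t ≠ 0) (hr : Lowerable ξ s r)
    (ht : Lowerable ξ s t) : wedge a b ∈ bracketSpan (adEig ξ s) (adEig ξ (r + t - s)) := by
  -- lowering `a` needs `z ⬝ᵥ b = 0` for `z ∈ V_{s-r}`, which can fail only if `t + s = r`
  by_cases hts : t + s = r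
  · obtain ⟨u, hu, hu0, hbu⟩ := ht b hb
    have h := wedge_mem_bracketSpan_of_lowering hskew hb ha hu hu0 hbu (by rwa [add_comm])
      (by contrapose! hs; linarith)
    rw [add_comm t r, wedge_swap] at h
    simpa using neg_mem h
  · obtain ⟨u, hu, hu0, hau⟩ := hr a ha
    exact wedge_mem_bracketSpan_of_lowering hskew ha hb hu hu0 hau hrt hts

theorem adEig_eq_bracketSpan (hskew : ξᵀ = -ξ) {s l : ℝ} (hs : s ≠ 0) (hl : l ≠ 0)
    (hlow : ∀ r t, r + t = l → vecEig ξ r ≠ ⊥ → vecEig ξ t ≠ ⊥ → Lowerable ξ s r) :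
    adEig ξ l = bracketSpan (adEig ξ s) (adEig ξ (l - s)) := by
  refine le_antisymm ((adEig_le_wedgeSpan hskew l).trans <| iSup₂_le fun r t => iSup_le
    fun hrt => Submodule.map₂_le.2 fun a ha b hb => ?_) (Submodule.span_le.2 ?_)
  · rcases eq_or_ne a 0 with rfl | ha0
    · simp
    rcases eq_or_ne b 0 with rfl | hb0
    · simp
    have hr : vecEig ξ r ≠ ⊥ := (Submodule.ne_bot_iff _).2 ⟨a, ha, ha0⟩
    have ht : vecEig ξ t ≠ ⊥ := (Submodule.ne_bot_iff _).2 ⟨b, hb, hb0⟩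
    subst hrt
    exact wedge_mem_bracketSpan hskew hs ha hb hl (hlow r t rfl hr ht)
      (hlow t r (add_comm t r) ht hr)
  · rintro _ ⟨x, hx, y, hy, rfl⟩
    simpa using lie_mem_adEig hx hy

end Lowering

section Generation

variable {K L : Type*} [Field K] [LieRing L] [LieAlgebra K L]

theorem bracketSpan_le {p q : Submodule K L} {A : LieSubalgebra K L} (hp : p ≤ A.toSubmodule)
    (hq : q ≤ A.toSubmodule) : bracketSpan p q ≤ A.toSubmodule :=
  Submodule.span_le.2 <| by
    rintro _ ⟨x, hx, y, hy, rfl⟩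
    exact A.lie_mem (hp hx) (hq hy)

theorem le_of_eq_bracketSpan (g : ℤ → Submodule K L) (A : LieSubalgebra K L)
    (h₀ : g 0 ≤ A.toSubmodule) (hpos₁ : g 1 ≤ A.toSubmodule) (hneg₁ : g (-1) ≤ A.toSubmodule)
    (hpos : ∀ m, 1 < m → g m = bracketSpan (g 1) (g (m - 1)))
    (hneg : ∀ m, m < -1 → g m = bracketSpan (g (-1)) (g (m + 1))) (m : ℤ) :
    g m ≤ A.toSubmodule := by
  have key : ∀ k : ℕ, g k ≤ A.toSubmodule ∧ g (-k) ≤ A.toSubmodule := by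
    intro k
    induction k with
    | zero => simpa using h₀
    | succ k ih =>
      rcases Nat.eq_zero_or_pos k with rfl | hk
      · simpa using ⟨hpos₁, hneg₁⟩
      constructor
      · rw [hpos _ (by omega)]
        exact bracketSpan_le hpos₁ (by simpa using ih.1)
      · rw [hneg _ (by omega)]
        exact bracketSpan_le hneg₁ (by convert ih.2 using 2; push_cast; ring)
  rcases Int.natAbs_eq m with h | h <;> rw [h]
  exacts [(key _).1, (key _).2]

end Generation

section Ladder

variable {n : ℕ} {ξ : Matrix (Fin n) (Fin n) ℝ}

structure LadderSpectrum (ξ : Matrix (Fin n) (Fin n) ℝ) : Prop where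
  add_eq_intCast : ∀ r t, vecEig ξ r ≠ ⊥ → vecEig ξ t ≠ ⊥ → ∃ m : ℤ, r + t = m
  lowerable : ∀ s : ℤ, (s = 1 ∨ s = -1) → ∀ r t, vecEig ξ r ≠ ⊥ → vecEig ξ t ≠ ⊥ →
    1 < s * (r + t) → Lowerable ξ s r

namespace LadderSpectrum

theorem adEig_eq_bracketSpan (h : LadderSpectrum ξ) (hskew : ξᵀ = -ξ) {s : ℤ}
    (hs : s = 1 ∨ s = -1) {l : ℝ} (hl : 1 < s * l) :
    adEig ξ l = bracketSpan (adEig ξ s) (adEig ξ (l - s)) :=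
  _root_.adEig_eq_bracketSpan hskew (by rcases hs with rfl | rfl <;> norm_num)
    (by rintro rfl; rw [mul_zero] at hl; linarith)
    fun r t hrt hr ht => h.lowerable s hs r t hr ht (hrt ▸ hl)

theorem lieSpan_eq_soC (h : LadderSpectrum ξ) (hskew : ξᵀ = -ξ) :
    (LieSubalgebra.lieSpan ℂ (Matrix (Fin n) (Fin n) ℂ)
        ((adEig ξ (-1) : Set (Matrix (Fin n) (Fin n) ℂ))
          ∪ (adEig ξ 0 : Set (Matrix (Fin n) (Fin n) ℂ))
          ∪ (adEig ξ 1 : Set (Matrix (Fin n) (Fin n) ℂ)))).toSubmodule = soC n := by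
  set A := LieSubalgebra.lieSpan ℂ (Matrix (Fin n) (Fin n) ℂ)
    ((adEig ξ (-1) : Set (Matrix (Fin n) (Fin n) ℂ)) ∪ (adEig ξ 0 : Set _) ∪ (adEig ξ 1 : Set _))
  have hgen : ∀ m : ℤ, adEig ξ m ≤ A.toSubmodule := by
    refine le_of_eq_bracketSpan (fun m : ℤ => adEig ξ m) A ?_ ?_ ?_ (fun m hm => ?_)
      (fun m hm => ?_)
    · exact fun x hx => LieSubalgebra.subset_lieSpan (Or.inl (Or.inr (by simpa using hx)))
    · exact fun x hx => LieSubalgebra.subset_lieSpan (Or.inr (by simpa using hx))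
    · exact fun x hx => LieSubalgebra.subset_lieSpan (Or.inl (Or.inl (by simpa using hx)))
    · simpa using h.adEig_eq_bracketSpan hskew (s := 1) (Or.inl rfl) (l := m)
        (by simpa using (Int.cast_lt (R := ℝ)).2 hm)
    · simpa using h.adEig_eq_bracketSpan hskew (s := -1) (Or.inr rfl) (l := m)
        (by simpa [lt_neg] using (Int.cast_lt (R := ℝ)).2 hm)
  refine le_antisymm (fun x hx => ?_) ((soC_le_iSup_wedgeSpan hskew).trans <| iSup_le fun _ =>
    iSup₂_le fun r t => iSup_le fun _ => Submodule.map₂_le.2 fun a ha b hb => ?_)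
  · show xᵀ = -x
    refine (LieAlgebra.Orthogonal.mem_so _ _ _).1 <|
      (LieSubalgebra.lieSpan_le (K := LieAlgebra.Orthogonal.so (Fin n) ℂ)).2 ?_ hx
    rintro y ((hy | hy) | hy) <;> exact (LieAlgebra.Orthogonal.mem_so _ _ _).2 hy.1
  · rcases eq_or_ne a 0 with rfl | ha0
    · simp
    rcases eq_or_ne b 0 with rfl | hb0
    · simp
    obtain ⟨m, hm⟩ := h.add_eq_intCast r t ((Submodule.ne_bot_iff _).2 ⟨a, ha, ha0⟩)
      ((Submodule.ne_bot_iff _).2 ⟨b, hb, hb0⟩)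
    exact hgen m (hm ▸ wedge_mem_adEig hskew ha hb)

end LadderSpectrum

end Ladder

section Patterns

variable {n : ℕ} {ξ : Matrix (Fin n) (Fin n) ℝ}

theorem ladderSpectrum_of_integral (hskew : ξᵀ = -ξ) {k : ℕ}
    (hspec : ∀ r : ℝ, vecEig ξ r ≠ ⊥ ↔ ∃ j : ℤ, |j| ≤ (k : ℤ) ∧ r = j) :
    LadderSpectrum ξ where
  add_eq_intCast r t hr ht := by
    obtain ⟨i, -, rfl⟩ := (hspec r).1 hr
    obtain ⟨j, -, rfl⟩ := (hspec t).1 ht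
    exact ⟨i + j, by push_cast; ring⟩
  lowerable s hs r t hr ht hrt := by
    obtain ⟨i, hi, rfl⟩ := (hspec r).1 hr
    obtain ⟨j, hj, rfl⟩ := (hspec t).1 ht
    have hij : 1 < s * (i + j) := by exact_mod_cast hrt
    rw [abs_le] at hi hj
    refine lowerable_of_ne_bot hskew ((hspec _).2 ⟨i - s, ?_, by push_cast; ring⟩) ?_
    · rw [abs_le]
      rcases hs with rfl | rfl <;> omega
    · exact_mod_cast (by omega : 2 * i ≠ s)

theorem ladderSpectrum_of_halfIntegral (hskew : ξᵀ = -ξ) {k : ℕ}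
    (hspec : ∀ r : ℝ, vecEig ξ r ≠ ⊥ ↔
      ∃ j : ℤ, -(k : ℤ) - 1 ≤ j ∧ j ≤ (k : ℤ) ∧ r = (j : ℝ) + 1 / 2)
    (hdim : 2 ≤ finrank ℂ (vecEig ξ (1 / 2))) :
    LadderSpectrum ξ where
  add_eq_intCast r t hr ht := by
    obtain ⟨i, -, -, rfl⟩ := (hspec r).1 hr
    obtain ⟨j, -, -, rfl⟩ := (hspec t).1 ht
    exact ⟨i + j + 1, by push_cast; ring⟩
  lowerable s hs r t hr ht hrt := by
    obtain ⟨i, hi₁, hi₂, rfl⟩ := (hspec r).1 hr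
    obtain ⟨j, hj₁, hj₂, rfl⟩ := (hspec t).1 ht
    have hij : 1 < s * (i + j + 1) := by
      have : (1 : ℝ) < s * ((i + j + 1 : ℤ) : ℝ) := by push_cast; linarith
      exact_mod_cast this
    by_cases hi : 2 * i + 1 = s
    · rcases hs with rfl | rfl
      · obtain rfl : i = 0 := by omega
        simpa using lowerable_one_half hdim
      · obtain rfl : i = -1 := by omega
        convert lowerable_neg_one_half hdim using 1 <;> norm_num
    refine lowerable_of_ne_bot hskew ((hspec _).2 ⟨i - s, ?_, ?_, by push_cast; ring⟩) ?_
    · rcases hs with rfl | rfl <;> omega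
    · rcases hs with rfl | rfl <;> omega
    · have : ((2 * i + 1 : ℤ) : ℝ) ≠ s := by exact_mod_cast hi
      contrapose! this
      push_cast
      linarith

end Patterns

theorem canonical_of_eigenvalue_pattern_general {n : ℕ}
    (ξ : Matrix (Fin n) (Fin n) ℝ) (hskew : ξᵀ = -ξ)
    (hcase :
      (∃ k : ℕ, ∀ lam : ℝ,
        Module.End.HasEigenvalue (Matrix.toLin' (ξ.map (Complex.ofReal)))
            (lam * Complex.I) ↔ ∃ j : ℤ, |j| ≤ (k : ℤ) ∧ lam = (j : ℝ)) ∨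
      (∃ k : ℕ, (∀ lam : ℝ,
        Module.End.HasEigenvalue (Matrix.toLin' (ξ.map (Complex.ofReal)))
            (lam * Complex.I) ↔
          ∃ j : ℤ, -(k : ℤ) - 1 ≤ j ∧ j ≤ (k : ℤ) ∧ lam = (j : ℝ) + 1 / 2) ∧
        2 ≤ Module.finrank ℂ (Module.End.eigenspace
          (Matrix.toLin' (ξ.map (Complex.ofReal))) ((1 / 2 : ℝ) * Complex.I)))) :
    (∀ l : ℤ, 1 < l →
      adEig ξ (l : ℝ) = bracketSpan (adEig ξ 1) (adEig ξ ((l : ℝ) - 1))) ∧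
    (LieSubalgebra.lieSpan ℂ (Matrix (Fin n) (Fin n) ℂ)
        ((adEig ξ (-1) : Set (Matrix (Fin n) (Fin n) ℂ))
          ∪ (adEig ξ 0 : Set (Matrix (Fin n) (Fin n) ℂ))
          ∪ (adEig ξ 1 : Set (Matrix (Fin n) (Fin n) ℂ)))).toSubmodule = soC n := by
  have hladder : LadderSpectrum ξ := by
    rcases hcase with ⟨k, hspec⟩ | ⟨k, hspec, hdim⟩
    · exact ladderSpectrum_of_integral hskew hspec
    · exact ladderSpectrum_of_halfIntegral hskew hspec hdim
  refine ⟨fun l hl => ?_, hladder.lieSpan_eq_soC hskew⟩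
  simpa using hladder.adEig_eq_bracketSpan hskew (s := 1) (Or.inl rfl) (l := l)
    (by simpa using (Int.cast_lt (R := ℝ)).2 hl)

/-- Suppose `ξ ∈ so(n)` has eigenvalues on `ℂⁿ` exactly `± i j`, `0 ≤ j ≤ k` (case (a)),
or exactly `± i(j+1/2)`, `0 ≤ j ≤ k`, with `± i/2` of multiplicity at least `2` (case (b)).
Then `g_ℓ = [g_1, g_{ℓ-1}]` for every `ℓ > 1`, and `so(n,ℂ)` is generated by
`g_{-1} ⊕ g_0 ⊕ g_1`, i.e. `ξ` is a canonical element. -/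
theorem canonical_of_eigenvalue_pattern {n : ℕ} (hn : 3 ≤ n)
    (ξ : Matrix (Fin n) (Fin n) ℝ) (hskew : ξᵀ = -ξ)
    (hcase :
      (∃ k : ℕ, ∀ lam : ℝ,
        Module.End.HasEigenvalue (Matrix.toLin' (ξ.map (Complex.ofReal)))
            (lam * Complex.I) ↔ ∃ j : ℤ, |j| ≤ (k : ℤ) ∧ lam = (j : ℝ)) ∨
      (∃ k : ℕ, (∀ lam : ℝ,
        Module.End.HasEigenvalue (Matrix.toLin' (ξ.map (Complex.ofReal)))
            (lam * Complex.I) ↔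
          ∃ j : ℤ, -(k : ℤ) - 1 ≤ j ∧ j ≤ (k : ℤ) ∧ lam = (j : ℝ) + 1 / 2) ∧
        2 ≤ Module.finrank ℂ (Module.End.eigenspace
          (Matrix.toLin' (ξ.map (Complex.ofReal))) ((1 / 2 : ℝ) * Complex.I)))) :
    (∀ l : ℤ, 1 < l →
      adEig ξ (l : ℝ) = bracketSpan (adEig ξ 1) (adEig ξ ((l : ℝ) - 1))) ∧
    (LieSubalgebra.lieSpan ℂ (Matrix (Fin n) (Fin n) ℂ)
        ((adEig ξ (-1) : Set (Matrix (Fin n) (Fin n) ℂ))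
          ∪ (adEig ξ 0 : Set (Matrix (Fin n) (Fin n) ℂ))
          ∪ (adEig ξ 1 : Set (Matrix (Fin n) (Fin n) ℂ)))).toSubmodule = soC n :=
  canonical_of_eigenvalue_pattern_general ξ hskew hcase
end
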